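/- arXiv:1807.05752 — 5 statements merged into one kernel-verified Lean document; each statement's English description precedes it below -/
import Mathlib

section
/- If G is a graph on n vertices (n even) with minimum degree at least n/2, then G has a perfect matching. -/
/-!
Take a matching `M` whose vertex set is maximal. If it missed a vertex, it would miss two, `u`
and `v`, by parity. Maximality forces all neighbours of `u` and `v` to be matched, and forbids a
matched pair `x y` with `u ~ x` and `v ~ y`, since `u x y v` would be an augmenting path. Hence the
partner map sends `N(v)` injectively into `M.verts \ N(u)`, so
`deg u + deg v ≤ |M.verts| ≤ n - 2`, contradicting the degree bound.
-/

namespace Set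

theorem ncard_add_ncard_le_of_injOn {α β : Type*} [Finite β] {A S : Set β} {B : Set α}
    (p : α → β) (hA : A ⊆ S) (hB : MapsTo p B S) (hinj : InjOn p B)
    (hdisj : ∀ b ∈ B, p b ∉ A) : A.ncard + B.ncard ≤ S.ncard := by
  rw [← hinj.ncard_image, ← ncard_union_eq]
  · exact ncard_le_ncard (union_subset hA hB.image_subset)
  · rw [disjoint_right]
    rintro _ ⟨b, hb, rfl⟩
    exact hdisj b hb

end Set

namespace SimpleGraph

variable {V : Type*} {G : SimpleGraph V}

lemma ncard_neighborSet_eq_degree [Fintype V] [DecidableRel G.Adj] (v : V) :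
    (G.neighborSet v).ncard = G.degree v := by
  rw [← card_neighborSet_eq_degree, Set.ncard_eq_toFinset_card', Set.toFinset_card]

namespace Subgraph

variable {M : G.Subgraph} {u v x y : V}

lemma IsMatching.deleteVerts_pair (hM : M.IsMatching) (hxy : M.Adj x y) :
    (M.deleteVerts {x, y}).IsMatching := by
  rintro a ⟨ha, haxy⟩
  obtain ⟨w, haw, huniq⟩ := hM ha
  have hw : w ∉ ({x, y} : Set V) := by
    rintro (rfl | rfl)
    · exact haxy (.inr (hM.eq_of_adj_right haw hxy.symm))
    · exact haxy (.inl (hM.eq_of_adj_right haw hxy))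
  exact ⟨w, deleteVerts_adj.mpr ⟨ha, haxy, M.edge_vert haw.symm, hw, haw⟩,
    fun z hz => huniq z (deleteVerts_adj.mp hz).2.2.2.2⟩

lemma IsMatching.exists_verts_ssubset_of_adj (hM : M.IsMatching) (hu : u ∉ M.verts)
    (hv : v ∉ M.verts) (huv : G.Adj u v) :
    ∃ M' : G.Subgraph, M'.IsMatching ∧ M.verts ⊂ M'.verts := by
  refine ⟨M ⊔ G.subgraphOfAdj huv, hM.sup (.subgraphOfAdj huv) ?_, ?_⟩
  · rw [hM.support_eq_verts, (IsMatching.subgraphOfAdj huv).support_eq_verts,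
      subgraphOfAdj_verts]
    simp [hu, hv]
  · rw [verts_sup]
    exact (Set.ssubset_iff_of_subset Set.subset_union_left).mpr ⟨u, by simp, hu⟩

lemma IsMatching.exists_verts_ssubset_of_augmenting (hM : M.IsMatching) (hu : u ∉ M.verts)
    (hv : v ∉ M.verts) (huv : u ≠ v) (hxy : M.Adj x y) (hux : G.Adj u x) (hvy : G.Adj v y) :
    ∃ M' : G.Subgraph, M'.IsMatching ∧ M.verts ⊂ M'.verts := by
  have hx := M.edge_vert hxy
  have hy := M.edge_vert hxy.symm
  have hM₀ := hM.deleteVerts_pair hxy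
  have hpath : (G.subgraphOfAdj hux ⊔ G.subgraphOfAdj hvy).IsMatching := by
    refine (IsMatching.subgraphOfAdj hux).sup (.subgraphOfAdj hvy) ?_
    rw [(IsMatching.subgraphOfAdj hux).support_eq_verts,
      (IsMatching.subgraphOfAdj hvy).support_eq_verts]
    simp only [subgraphOfAdj_verts, Set.disjoint_insert_left, Set.disjoint_singleton_left,
      Set.mem_insert_iff, Set.mem_singleton_iff, not_or]
    exact ⟨⟨huv, fun h => hu (h ▸ hy)⟩, fun h => hv (h ▸ hx), hxy.ne⟩
  refine ⟨M.deleteVerts {x, y} ⊔ (G.subgraphOfAdj hux ⊔ G.subgraphOfAdj hvy),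
    hM₀.sup hpath ?_, ?_⟩
  · rw [hM₀.support_eq_verts, hpath.support_eq_verts]
    simp [hu, hv]
  · refine (Set.ssubset_iff_of_subset fun z hz => ?_).mpr ⟨u, by simp, hu⟩
    by_cases hzxy : z ∈ ({x, y} : Set V)
    · rcases hzxy with rfl | rfl <;> simp
    · exact Or.inl ⟨hz, hzxy⟩

lemma IsMatching.degree_add_degree_le [Fintype V] [DecidableRel G.Adj] (hM : M.IsMatching)
    (hu : u ∉ M.verts) (hv : v ∉ M.verts) (huv : u ≠ v)
    (hmax : ∀ M' : G.Subgraph, M'.IsMatching → ¬M.verts ⊂ M'.verts) :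
    G.degree u + G.degree v ≤ M.verts.ncard := by
  have hN : ∀ w ∉ M.verts, G.neighborSet w ⊆ M.verts := fun w hw z hwz => by
    by_contra hz
    obtain ⟨M', hM', hlt⟩ := hM.exists_verts_ssubset_of_adj hw hz hwz
    exact hmax M' hM' hlt
  choose! p hp using fun b (hb : b ∈ M.verts) => (hM hb).exists
  rw [← ncard_neighborSet_eq_degree, ← ncard_neighborSet_eq_degree]
  refine Set.ncard_add_ncard_le_of_injOn p (hN u hu)
    (fun b hb => M.edge_vert (hp b (hN v hv hb)).symm) ?_ ?_
  · intro b₁ hb₁ b₂ hb₂ h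
    exact hM.eq_of_adj_right (hp b₁ (hN v hv hb₁)) (h ▸ hp b₂ (hN v hv hb₂))
  · intro b hb hpb
    obtain ⟨M', hM', hlt⟩ := hM.exists_verts_ssubset_of_augmenting hu hv huv
      (hp b (hN v hv hb)).symm hpb hb
    exact hmax M' hM' hlt

theorem IsMatching.exists_verts_ssubset_of_not_isSpanning [Fintype V] [DecidableRel G.Adj]
    (heven : Even (Fintype.card V)) (hdeg : ∀ v, Fintype.card V ≤ 2 * G.degree v)
    (hM : M.IsMatching) (hspan : ¬M.IsSpanning) :
    ∃ M' : G.Subgraph, M'.IsMatching ∧ M.verts ⊂ M'.verts := by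
  by_contra! hmax
  have hlt : M.verts.ncard < Fintype.card V := by
    rw [← Nat.card_eq_fintype_card, ← Set.ncard_univ]
    exact Set.ncard_lt_ncard (Set.ssubset_univ_iff.mpr (mt isSpanning_iff.mpr hspan))
  have hMeven : Even M.verts.ncard := by
    classical
    rw [Set.ncard_eq_toFinset_card']
    exact hM.even_card
  have hcompl : 1 < M.vertsᶜ.ncard := by
    rw [Set.ncard_compl, Nat.card_eq_fintype_card]
    obtain ⟨a, ha⟩ := hMeven
    obtain ⟨b, hb⟩ := heven
    omega
  obtain ⟨u, v, hu, hv, huv⟩ := (Set.one_lt_ncard_iff).mp hcompl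
  have := hM.degree_add_degree_le hu hv huv hmax
  have := hdeg u
  have := hdeg v
  omega

end Subgraph
end SimpleGraph

theorem stmt_0_general {V : Type*} [Fintype V] (G : SimpleGraph V)
    [DecidableRel G.Adj] (heven : Even (Fintype.card V))
    (hdeg : ∀ v : V, Fintype.card V ≤ 2 * G.degree v) :
    ∃ M : G.Subgraph, M.IsPerfectMatching := by
  obtain ⟨M, hM, hmax⟩ := Set.Finite.exists_maximalFor (fun M : G.Subgraph => M.verts)
    {M | M.IsMatching} (Set.toFinite _) ⟨⊥, fun _ h => h.elim⟩
  refine ⟨M, hM, by_contra fun hspan => ?_⟩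
  obtain ⟨M', hM', hlt⟩ := hM.exists_verts_ssubset_of_not_isSpanning heven hdeg hspan
  exact hlt.not_subset (hmax hM' hlt.subset)

/-- If `G` is a graph on `n` vertices (`n` even) with minimum degree at least `n/2`,
then `G` has a perfect matching. -/
theorem stmt_0 {V : Type*} [Fintype V] [DecidableEq V] (G : SimpleGraph V)
    [DecidableRel G.Adj] (heven : Even (Fintype.card V))
    (hdeg : ∀ v : V, Fintype.card V ≤ 2 * G.degree v) :
    ∃ M : G.Subgraph, M.IsPerfectMatching :=
  stmt_0_general G heven hdeg
end

section
/- Let G be a 3-uniform hypergraph on n vertices with 3 | n, in which every pair of vertices is contained in at least n/3 edges. Then G has a matching of size at least n/3 - 1. -/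
lemma third_vertex {V : Type*} [DecidableEq V] {t : Finset V} (ht : t.card = 3) {u v : V}
    (hu : u ∈ t) (hv : v ∈ t) (huv : u ≠ v) :
    ∃ w, w ≠ u ∧ w ≠ v ∧ t = {u, v, w} := by
  have hsub : ({u, v} : Finset V) ⊆ t := by
    intro x hx
    simp only [Finset.mem_insert, Finset.mem_singleton] at hx
    rcases hx with rfl | rfl <;> assumption
  have hcard : ({u, v} : Finset V).card = 2 := by
    rw [Finset.card_insert_of_notMem (by simp [huv]), Finset.card_singleton]
  have h1 : (t \ {u, v}).card = 1 := by
    rw [Finset.card_sdiff_of_subset hsub, ht, hcard]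
  obtain ⟨w, hw⟩ := Finset.card_eq_one.mp h1
  have hwmem : w ∈ t \ ({u, v} : Finset V) := hw ▸ Finset.mem_singleton_self w
  rw [Finset.mem_sdiff, Finset.mem_insert, Finset.mem_singleton] at hwmem
  refine ⟨w, fun h => hwmem.2 (Or.inl h), fun h => hwmem.2 (Or.inr h), ?_⟩
  have hu2 := Finset.union_sdiff_of_subset hsub
  rw [hw] at hu2
  rw [← hu2]
  ext y
  simp only [Finset.mem_union, Finset.mem_insert, Finset.mem_singleton]
  tauto

lemma aug {V : Type*} [DecidableEq V] {G M : Finset (Finset V)} (hMG : M ⊆ G)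
    (hM : (↑M : Set (Finset V)).PairwiseDisjoint id)
    {a b c d w x : V} {e : Finset V} (he : e ∈ M)
    (ha : ∀ f ∈ M, a ∉ f) (hb : ∀ f ∈ M, b ∉ f) (hc : ∀ f ∈ M, c ∉ f) (hd : ∀ f ∈ M, d ∉ f)
    (hac : a ≠ c) (had : a ≠ d) (hbc : b ≠ c) (hbd : b ≠ d)
    (hw : w ∈ e) (hx : x ∈ e) (hwx : w ≠ x)
    (h1 : ({a, b, w} : Finset V) ∈ G) (h2 : ({c, d, x} : Finset V) ∈ G) :
    ∃ M' : Finset (Finset V), M' ⊆ G ∧ (↑M' : Set (Finset V)).PairwiseDisjoint id ∧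
      M'.card = M.card + 1 := by
  have hax : a ≠ x := fun h => ha e he (h ▸ hx)
  have hbx : b ≠ x := fun h => hb e he (h ▸ hx)
  have hwc : w ≠ c := fun h => hc e he (h ▸ hw)
  have hwd : w ≠ d := fun h => hd e he (h ▸ hw)
  have hd12 : Disjoint ({a, b, w} : Finset V) ({c, d, x} : Finset V) := by
    rw [Finset.disjoint_left]
    intro y hy hy2
    simp only [Finset.mem_insert, Finset.mem_singleton] at hy hy2
    rcases hy with rfl | rfl | rfl <;> rcases hy2 with rfl | rfl | rfl <;>
      simp_all
  have hd1f : ∀ f ∈ M.erase e, Disjoint ({a, b, w} : Finset V) f := by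
    intro f hf
    rw [Finset.mem_erase] at hf
    have hef : Disjoint e f := hM (Finset.mem_coe.mpr he) (Finset.mem_coe.mpr hf.2)
      (Ne.symm hf.1)
    rw [Finset.disjoint_left]
    intro y hy hyf
    simp only [Finset.mem_insert, Finset.mem_singleton] at hy
    rcases hy with rfl | rfl | rfl
    · exact ha f hf.2 hyf
    · exact hb f hf.2 hyf
    · exact (Finset.disjoint_left.mp hef hw) hyf
  have hd2f : ∀ f ∈ M.erase e, Disjoint ({c, d, x} : Finset V) f := by
    intro f hf
    rw [Finset.mem_erase] at hf
    have hef : Disjoint e f := hM (Finset.mem_coe.mpr he) (Finset.mem_coe.mpr hf.2)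
      (Ne.symm hf.1)
    rw [Finset.disjoint_left]
    intro y hy hyf
    simp only [Finset.mem_insert, Finset.mem_singleton] at hy
    rcases hy with rfl | rfl | rfl
    · exact hc f hf.2 hyf
    · exact hd f hf.2 hyf
    · exact (Finset.disjoint_left.mp hef hx) hyf
  refine ⟨insert {a, b, w} (insert {c, d, x} (M.erase e)), ?_, ?_, ?_⟩
  · intro t ht
    simp only [Finset.mem_insert] at ht
    rcases ht with rfl | rfl | ht
    · exact h1
    · exact h2
    · exact hMG (Finset.mem_of_mem_erase ht)
  · rw [Finset.coe_insert, Finset.coe_insert]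
    have hbase : (↑(M.erase e) : Set (Finset V)).PairwiseDisjoint id := by
      apply hM.subset
      intro f hf
      exact Finset.mem_coe.mpr (Finset.mem_of_mem_erase (Finset.mem_coe.mp hf))
    have hstep : (insert ({c, d, x} : Finset V) (↑(M.erase e) : Set (Finset V))).PairwiseDisjoint id := by
      apply hbase.insert
      intro f hf _
      exact hd2f f (Finset.mem_coe.mp hf)
    apply hstep.insert
    intro f hf _
    rcases hf with rfl | hf
    · exact hd12
    · exact hd1f f (Finset.mem_coe.mp hf)
  · have ht2 : ({c, d, x} : Finset V) ∉ M.erase e := by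
      intro h
      exact hc _ (Finset.mem_of_mem_erase h) (by simp)
    have ht1 : ({a, b, w} : Finset V) ∉ insert ({c, d, x} : Finset V) (M.erase e) := by
      intro h
      rcases Finset.mem_insert.mp h with heq | h
      · have : a ∈ ({c, d, x} : Finset V) := heq ▸ (by simp)
        simp only [Finset.mem_insert, Finset.mem_singleton] at this
        tauto
      · exact ha _ (Finset.mem_of_mem_erase h) (by simp)
    rw [Finset.card_insert_of_notMem ht1, Finset.card_insert_of_notMem ht2,
      Finset.card_erase_of_mem he]
    have : 0 < M.card := Finset.card_pos.mpr ⟨e, he⟩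
    omega

/-- A 3-uniform hypergraph on `n` vertices (`3 ∣ n`) with minimum codegree at least `n/3`
has a matching of size at least `n/3 - 1`. -/
theorem stmt_6 {V : Type*} [Fintype V] [DecidableEq V] (n : ℕ) (hn : Fintype.card V = n)
    (h3 : 3 ∣ n) (G : Finset (Finset V)) (hunif : ∀ e ∈ G, e.card = 3)
    (hcodeg : ∀ u v : V, u ≠ v → n ≤ 3 * (G.filter (fun e => u ∈ e ∧ v ∈ e)).card) :
    ∃ M : Finset (Finset V), M ⊆ G ∧ (M : Set (Finset V)).PairwiseDisjoint id ∧
      n / 3 - 1 ≤ M.card := by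
  classical
  obtain ⟨M, hMS, hmax⟩ := Finset.exists_max_image
    (G.powerset.filter fun N : Finset (Finset V) => (N : Set (Finset V)).PairwiseDisjoint id) (fun N => N.card)
    ⟨∅, by simp⟩
  rw [Finset.mem_filter, Finset.mem_powerset] at hMS
  obtain ⟨hMG, hMd⟩ := hMS
  refine ⟨M, hMG, hMd, ?_⟩
  by_contra hlt
  push_neg at hlt
  have hn3 : 3 * (n / 3) = n := Nat.mul_div_cancel' h3
  have hm2 : 3 * (M.card + 2) ≤ n := by omega
  have hCcard : (M.biUnion id).card = 3 * M.card := by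
    rw [Finset.card_biUnion (fun x hx y hy hxy =>
      hMd (Finset.mem_coe.mpr hx) (Finset.mem_coe.mpr hy) hxy)]
    have hc3 : ∀ e ∈ M, (id e).card = 3 := fun e he => hunif e (hMG he)
    rw [Finset.sum_congr rfl hc3, Finset.sum_const, smul_eq_mul, Nat.mul_comm]
  -- any edge fully outside the covered set contradicts maximality
  have hbig : ∀ t ∈ G, (∀ y ∈ t, y ∉ M.biUnion id) → False := by
    intro t htG hyt
    have htM : t ∉ M := by
      intro htM
      obtain ⟨y, hy⟩ := Finset.card_pos.mp (by rw [hunif t htG]; omega)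
      exact hyt y hy (Finset.mem_biUnion.mpr ⟨t, htM, hy⟩)
    have hmem : insert t M ∈ G.powerset.filter
        (fun N : Finset (Finset V) => (N : Set (Finset V)).PairwiseDisjoint id) := by
      rw [Finset.mem_filter, Finset.mem_powerset]
      refine ⟨Finset.insert_subset htG hMG, ?_⟩
      rw [Finset.coe_insert]
      apply hMd.insert
      intro f hf _
      rw [Finset.disjoint_left]
      intro y hy hyf
      exact hyt y hy (Finset.mem_biUnion.mpr ⟨f, Finset.mem_coe.mp hf, hyf⟩)
    have := hmax _ hmem
    rw [Finset.card_insert_of_notMem htM] at this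
    omega
  -- links of uncovered pairs are large
  have key : ∀ u v : V, u ∉ M.biUnion id → v ∉ M.biUnion id → u ≠ v →
      M.card + 2 ≤ ((M.biUnion id).filter fun w => ({u, v, w} : Finset V) ∈ G).card := by
    intro u v huC hvC huv
    have hsub : G.filter (fun e => u ∈ e ∧ v ∈ e) ⊆
        (((M.biUnion id).filter fun w => ({u, v, w} : Finset V) ∈ G)).image
          (fun w => ({u, v, w} : Finset V)) := by
      intro t ht
      rw [Finset.mem_filter] at ht
      obtain ⟨htG, hut, hvt⟩ := ht
      obtain ⟨w, hwu, hwv, hteq⟩ := third_vertex (hunif t htG) hut hvt huv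
      subst hteq
      have hwC : w ∈ M.biUnion id := by
        by_contra hwC
        apply hbig _ htG
        intro y hy
        simp only [Finset.mem_insert, Finset.mem_singleton] at hy
        rcases hy with rfl | rfl | rfl <;> assumption
      exact Finset.mem_image.mpr ⟨w, Finset.mem_filter.mpr ⟨hwC, htG⟩, rfl⟩
    have hinj : Set.InjOn (fun w => ({u, v, w} : Finset V))
        ((M.biUnion id).filter fun w => ({u, v, w} : Finset V) ∈ G) := by
      intro w1 hw1 w2 hw2 heq
      have hw1C : w1 ∈ M.biUnion id := (Finset.mem_filter.mp (Finset.mem_coe.mp hw1)).1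
      have heq' : ({u, v, w1} : Finset V) = {u, v, w2} := heq
      have hmem : w1 ∈ ({u, v, w2} : Finset V) := heq' ▸ (by simp : w1 ∈ ({u, v, w1} : Finset V))
      simp only [Finset.mem_insert, Finset.mem_singleton] at hmem
      rcases hmem with rfl | rfl | h
      · exact absurd hw1C huC
      · exact absurd hw1C hvC
      · exact h
    have hE := hcodeg u v huv
    have hle := Finset.card_le_card hsub
    rw [Finset.card_image_of_injOn hinj] at hle
    omega
  -- six distinct uncovered vertices
  have hUcard : 6 ≤ (Finset.univ \ M.biUnion id).card := by
    rw [Finset.card_sdiff_of_subset (Finset.subset_univ _), Finset.card_univ, hn, hCcard]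
    omega
  obtain ⟨a, haU⟩ := Finset.card_pos.mp (by omega : 0 < (Finset.univ \ M.biUnion id).card)
  obtain ⟨b, hbU⟩ := Finset.card_pos.mp (show 0 < ((Finset.univ \ M.biUnion id).erase a).card by
    rw [Finset.card_erase_of_mem haU]; omega)
  obtain ⟨c, hcU⟩ := Finset.card_pos.mp
    (show 0 < (((Finset.univ \ M.biUnion id).erase a).erase b).card by
      rw [Finset.card_erase_of_mem hbU, Finset.card_erase_of_mem haU]; omega)
  obtain ⟨d, hdU⟩ := Finset.card_pos.mp
    (show 0 < ((((Finset.univ \ M.biUnion id).erase a).erase b).erase c).card by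
      rw [Finset.card_erase_of_mem hcU, Finset.card_erase_of_mem hbU,
        Finset.card_erase_of_mem haU]; omega)
  obtain ⟨p, hpU⟩ := Finset.card_pos.mp
    (show 0 < (((((Finset.univ \ M.biUnion id).erase a).erase b).erase c).erase d).card by
      rw [Finset.card_erase_of_mem hdU, Finset.card_erase_of_mem hcU,
        Finset.card_erase_of_mem hbU, Finset.card_erase_of_mem haU]; omega)
  obtain ⟨q, hqU⟩ := Finset.card_pos.mp
    (show 0 < ((((((Finset.univ \ M.biUnion id).erase a).erase b).erase c).erase d).erase p).card by
      rw [Finset.card_erase_of_mem hpU, Finset.card_erase_of_mem hdU,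
        Finset.card_erase_of_mem hcU, Finset.card_erase_of_mem hbU,
        Finset.card_erase_of_mem haU]; omega)
  simp only [Finset.mem_erase, Finset.mem_sdiff, Finset.mem_univ, true_and] at haU hbU hcU hdU hpU hqU
  obtain ⟨hba, hbC⟩ := hbU
  obtain ⟨hcb, hca, hcC⟩ := hcU
  obtain ⟨hdc, hdb, hda, hdC⟩ := hdU
  obtain ⟨hpd, hpc, hpb, hpa, hpC⟩ := hpU
  obtain ⟨hqp, hqd, hqc, hqb, hqa, hqC⟩ := hqU
  have haC := haU
  -- split a covered-subset's cardinality over the matching edges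
  have hsplit : ∀ s : Finset V, s ⊆ M.biUnion id → ∑ e ∈ M, (s ∩ e).card = s.card := by
    intro s hs
    have heq : s = M.biUnion (fun e => s ∩ e) := by
      ext y
      simp only [Finset.mem_biUnion, Finset.mem_inter]
      constructor
      · intro hy
        obtain ⟨f, hf, hyf⟩ := Finset.mem_biUnion.mp (hs hy)
        exact ⟨f, hf, hy, hyf⟩
      · rintro ⟨f, hf, hy, _⟩
        exact hy
    conv_rhs => rw [heq]
    rw [Finset.card_biUnion]
    intro x hx y hy hxy
    exact (hMd (Finset.mem_coe.mpr hx) (Finset.mem_coe.mpr hy) hxy).mono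
      Finset.inter_subset_right Finset.inter_subset_right
  have hk1 := key a b haC hbC (Ne.symm hba)
  have hk2 := key c d hcC hdC (Ne.symm hdc)
  have hk3 := key p q hpC hqC (Ne.symm hqp)
  -- pigeonhole: some matching edge meets the three links in ≥ 4 points
  have hcl : ∃ e ∈ M,
      4 ≤ (((M.biUnion id).filter fun w => ({a, b, w} : Finset V) ∈ G) ∩ e).card +
        (((M.biUnion id).filter fun w => ({c, d, w} : Finset V) ∈ G) ∩ e).card +
        (((M.biUnion id).filter fun w => ({p, q, w} : Finset V) ∈ G) ∩ e).card := by
    by_contra hno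
    push_neg at hno
    have hsumle : ∑ e ∈ M,
        ((((M.biUnion id).filter fun w => ({a, b, w} : Finset V) ∈ G) ∩ e).card +
          (((M.biUnion id).filter fun w => ({c, d, w} : Finset V) ∈ G) ∩ e).card +
          (((M.biUnion id).filter fun w => ({p, q, w} : Finset V) ∈ G) ∩ e).card) ≤
        ∑ _e ∈ M, 3 :=
      Finset.sum_le_sum (fun e he => by have := hno e he; omega)
    rw [Finset.sum_const, smul_eq_mul] at hsumle
    rw [Finset.sum_add_distrib, Finset.sum_add_distrib,
      hsplit _ (Finset.filter_subset _ _), hsplit _ (Finset.filter_subset _ _),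
      hsplit _ (Finset.filter_subset _ _)] at hsumle
    omega
  obtain ⟨e, heM, h4⟩ := hcl
  have he3 : e.card = 3 := hunif e (hMG heM)
  have hA3 : (((M.biUnion id).filter fun w => ({a, b, w} : Finset V) ∈ G) ∩ e).card ≤ 3 :=
    le_trans (Finset.card_le_card Finset.inter_subset_right) (le_of_eq he3)
  have hB3 : (((M.biUnion id).filter fun w => ({c, d, w} : Finset V) ∈ G) ∩ e).card ≤ 3 :=
    le_trans (Finset.card_le_card Finset.inter_subset_right) (le_of_eq he3)
  have hC3 : (((M.biUnion id).filter fun w => ({p, q, w} : Finset V) ∈ G) ∩ e).card ≤ 3 :=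
    le_trans (Finset.card_le_card Finset.inter_subset_right) (le_of_eq he3)
  -- the augmenting step
  have final : ∀ u₁ v₁ u₂ v₂ : V, u₁ ∉ M.biUnion id → v₁ ∉ M.biUnion id →
      u₂ ∉ M.biUnion id → v₂ ∉ M.biUnion id →
      u₁ ≠ u₂ → u₁ ≠ v₂ → v₁ ≠ u₂ → v₁ ≠ v₂ →
      2 ≤ (((M.biUnion id).filter fun w => ({u₁, v₁, w} : Finset V) ∈ G) ∩ e).card →
      1 ≤ (((M.biUnion id).filter fun w => ({u₂, v₂, w} : Finset V) ∈ G) ∩ e).card → False := by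
    intro u₁ v₁ u₂ v₂ h1C h2C h3C h4C h12 h13 h23 h24 hA hB
    obtain ⟨x, hx⟩ := Finset.card_pos.mp (by omega :
      0 < (((M.biUnion id).filter fun w => ({u₂, v₂, w} : Finset V) ∈ G) ∩ e).card)
    have hxE : x ∈ e := (Finset.mem_inter.mp hx).2
    have hxG : ({u₂, v₂, x} : Finset V) ∈ G :=
      (Finset.mem_filter.mp (Finset.mem_inter.mp hx).1).2
    have herase : 0 < ((((M.biUnion id).filter
        fun w => ({u₁, v₁, w} : Finset V) ∈ G) ∩ e).erase x).card := by
      by_cases hxm : x ∈ ((M.biUnion id).filter fun w => ({u₁, v₁, w} : Finset V) ∈ G) ∩ e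
      · rw [Finset.card_erase_of_mem hxm]; omega
      · rw [Finset.erase_eq_of_notMem hxm]; omega
    obtain ⟨w, hwmem⟩ := Finset.card_pos.mp herase
    rw [Finset.mem_erase] at hwmem
    obtain ⟨hwx, hwm⟩ := hwmem
    rw [Finset.mem_inter, Finset.mem_filter] at hwm
    have hnotin : ∀ z : V, z ∉ M.biUnion id → ∀ f ∈ M, z ∉ f := fun z hz f hf hzf =>
      hz (Finset.mem_biUnion.mpr ⟨f, hf, hzf⟩)
    obtain ⟨M', hM'G, hM'd, hM'c⟩ := aug hMG hMd heM (hnotin _ h1C) (hnotin _ h2C)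
      (hnotin _ h3C) (hnotin _ h4C) h12 h13 h23 h24 hwm.2 hxE hwx hwm.1.2 hxG
    have hmem : M' ∈ G.powerset.filter
        (fun N : Finset (Finset V) => (N : Set (Finset V)).PairwiseDisjoint id) := by
      rw [Finset.mem_filter, Finset.mem_powerset]
      exact ⟨hM'G, hM'd⟩
    have := hmax _ hmem
    omega
  rcases (by omega :
      (2 ≤ (((M.biUnion id).filter fun w => ({a, b, w} : Finset V) ∈ G) ∩ e).card ∧
        1 ≤ (((M.biUnion id).filter fun w => ({c, d, w} : Finset V) ∈ G) ∩ e).card) ∨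
      (2 ≤ (((M.biUnion id).filter fun w => ({a, b, w} : Finset V) ∈ G) ∩ e).card ∧
        1 ≤ (((M.biUnion id).filter fun w => ({p, q, w} : Finset V) ∈ G) ∩ e).card) ∨
      (2 ≤ (((M.biUnion id).filter fun w => ({c, d, w} : Finset V) ∈ G) ∩ e).card ∧
        1 ≤ (((M.biUnion id).filter fun w => ({a, b, w} : Finset V) ∈ G) ∩ e).card) ∨
      (2 ≤ (((M.biUnion id).filter fun w => ({c, d, w} : Finset V) ∈ G) ∩ e).card ∧
        1 ≤ (((M.biUnion id).filter fun w => ({p, q, w} : Finset V) ∈ G) ∩ e).card) ∨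
      (2 ≤ (((M.biUnion id).filter fun w => ({p, q, w} : Finset V) ∈ G) ∩ e).card ∧
        1 ≤ (((M.biUnion id).filter fun w => ({a, b, w} : Finset V) ∈ G) ∩ e).card) ∨
      (2 ≤ (((M.biUnion id).filter fun w => ({p, q, w} : Finset V) ∈ G) ∩ e).card ∧
        1 ≤ (((M.biUnion id).filter fun w => ({c, d, w} : Finset V) ∈ G) ∩ e).card)) with
    ⟨hX, hY⟩ | ⟨hX, hY⟩ | ⟨hX, hY⟩ | ⟨hX, hY⟩ | ⟨hX, hY⟩ | ⟨hX, hY⟩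
  · exact final a b c d haC hbC hcC hdC (Ne.symm hca) (Ne.symm hda) (Ne.symm hcb)
      (Ne.symm hdb) hX hY
  · exact final a b p q haC hbC hpC hqC (Ne.symm hpa) (Ne.symm hqa) (Ne.symm hpb)
      (Ne.symm hqb) hX hY
  · exact final c d a b hcC hdC haC hbC hca hcb hda hdb hX hY
  · exact final c d p q hcC hdC hpC hqC (Ne.symm hpc) (Ne.symm hqc) (Ne.symm hpd)
      (Ne.symm hqd) hX hY
  · exact final p q a b hpC hqC haC hbC hpa hpb hqa hqb hX hY
  · exact final p q c d hpC hqC hcC hdC hpc hpd hqc hqd hX hY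
end

section
/- Let F be a finite field of characteristic 2, and let x, y, z ∈ F be distinct and nonzero with x + y + z ≠ 0, and suppose the six elements x, y, z, y+z, z+x, x+y are pairwise distinct and nonzero. Then the complete tripartite graph with parts {x, y+z}, {y, z+x}, {z, x+y} has a triangle decomposition into the four triangles {x,y,x+y}, {y+z,y,z}, {x,z+x,z}, {y+z,z+x,x+y}, each of which is a zero-sum triple (its three elements sum to 0). -/
set_option maxHeartbeats 4000000


/-- In a field of characteristic 2, if `x, y, z, y+z, z+x, x+y` are pairwise distinct and
nonzero, then the complete tripartite graph with parts `{x, y+z}`, `{y, z+x}`, `{z, x+y}`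
is decomposed by the four zero-sum triangles `{x,y,x+y}`, `{y+z,y,z}`, `{x,z+x,z}`,
`{y+z,z+x,x+y}`. -/
theorem stmt_13 {F : Type*} [Field F] [CharP F 2] [DecidableEq F] (x y z : F)
    (hdist : ({x, y, z, y + z, z + x, x + y} : Finset F).card = 6)
    (hne : (0 : F) ∉ ({x, y, z, y + z, z + x, x + y} : Finset F)) :
    ∀ T : Fin 4 → Finset F,
      T = ![{x, y, x + y}, {y + z, y, z}, {x, z + x, z}, {y + z, z + x, x + y}] →
      (∀ i : Fin 4, (T i).card = 3 ∧ (T i).sum id = 0) ∧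
      (∀ u v : F, u ≠ v →
        ((u ∈ ({x, y + z} : Finset F) ∧ v ∈ ({y, z + x} : Finset F)) ∨
         (u ∈ ({x, y + z} : Finset F) ∧ v ∈ ({z, x + y} : Finset F)) ∨
         (u ∈ ({y, z + x} : Finset F) ∧ v ∈ ({z, x + y} : Finset F))) →
        ∃! i : Fin 4, u ∈ T i ∧ v ∈ T i) := by
  have h2 : (2 : F) = 0 := by exact_mod_cast CharP.cast_eq_zero F 2
  -- pairwise distinctness
  have hl : ([x, y, z, y + z, z + x, x + y] : List F).Nodup := by
    have h1 := List.dedup_sublist ([x, y, z, y + z, z + x, x + y] : List F)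
    have hc : ([x, y, z, y + z, z + x, x + y] : List F).toFinset.card = _ :=
      List.card_toFinset _
    have h3 : ([x, y, z, y + z, z + x, x + y] : List F).toFinset
        = {x, y, z, y + z, z + x, x + y} := by simp [List.toFinset_cons]
    rw [← List.dedup_eq_self]
    exact h1.eq_of_length (by rw [← hc, h3, hdist]; rfl)
  simp only [List.nodup_cons, List.mem_cons, List.mem_singleton, List.nodup_nil,
    List.not_mem_nil, not_or, and_true, not_false_eq_true] at hl
  obtain ⟨⟨h1, h2', h3, h4, h5⟩, ⟨h6, h7, h8, h9⟩, ⟨h10, h11, h12⟩, ⟨h13, h14⟩, h15⟩ := hl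
  simp only [Finset.mem_insert, Finset.mem_singleton, not_or] at hne
  obtain ⟨n1, n2, n3, n4, n5, n6⟩ := hne
  have n1 := Ne.symm n1
  have n2 := Ne.symm n2
  have n3 := Ne.symm n3
  have n4 := Ne.symm n4
  have n5 := Ne.symm n5
  have n6 := Ne.symm n6
  -- derived distinctness with sums
  have d1 : x ≠ x + y := fun h => n2 (by linear_combination -h)
  have d2 : x ≠ z + x := fun h => n3 (by linear_combination -h)
  have d3 : y ≠ x + y := fun h => n1 (by linear_combination -h)
  have d4 : y ≠ y + z := fun h => n3 (by linear_combination -h)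
  have d5 : z ≠ y + z := fun h => n2 (by linear_combination -h)
  have d6 : z ≠ z + x := fun h => n1 (by linear_combination -h)
  have e1 : _ ≠ _ := Ne.symm h1; have e2 : _ ≠ _ := Ne.symm h2'; have e3 : _ ≠ _ := Ne.symm h3; have e4 : _ ≠ _ := Ne.symm h4
  have e5 : _ ≠ _ := Ne.symm h5; have e6 : _ ≠ _ := Ne.symm h6; have e7 : _ ≠ _ := Ne.symm h7; have e8 : _ ≠ _ := Ne.symm h8
  have e9 : _ ≠ _ := Ne.symm h9; have e10 : _ ≠ _ := Ne.symm h10; have e11 : _ ≠ _ := Ne.symm h11; have e12 : _ ≠ _ := Ne.symm h12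
  have e13 : _ ≠ _ := Ne.symm h13; have e14 : _ ≠ _ := Ne.symm h14; have e15 : _ ≠ _ := Ne.symm h15
  have f1 := d1.symm; have f2 := d2.symm; have f3 := d3.symm
  have f4 := d4.symm; have f5 := d5.symm; have f6 := d6.symm
  have all4 : ∀ (P : Fin 4 → Prop), P 0 → P 1 → P 2 → P 3 → ∀ j, P j := by
    intro P p0 p1 p2 p3 j
    fin_cases j
    exacts [p0, p1, p2, p3]
  have tri : ∀ a b c : F, a ≠ b → a ≠ c → b ≠ c → a + b + c = 0 →
      ({a, b, c} : Finset F).card = 3 ∧ ({a, b, c} : Finset F).sum id = 0 := by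
    intro a b c hab hac hbc habc
    refine ⟨?_, ?_⟩
    · rw [Finset.card_insert_of_notMem (by simp [hab, hac]),
        Finset.card_insert_of_notMem (by simp [hbc]), Finset.card_singleton]
    · rw [Finset.sum_insert (by simp [hab, hac]), Finset.sum_insert (by simp [hbc]),
        Finset.sum_singleton]
      simpa [← add_assoc] using habc
  intro T hT
  subst hT
  constructor
  · refine all4 _ ?_ ?_ ?_ ?_
    · exact tri x y (x + y) h1 d1 d3 (by linear_combination (x + y) * h2)
    · exact tri (y + z) y z e7 e10 h6 (by linear_combination (y + z) * h2)
    · exact tri x (z + x) z d2 h2' e11 (by linear_combination (z + x) * h2)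
    · exact tri (y + z) (z + x) (x + y) h13 h14 h15
        (by linear_combination (x + y + z) * h2)
  · have nx1 : x ∉ ({y + z, y, z} : Finset F) := by simp [h3, h1, h2']
    have nx3 : x ∉ ({y + z, z + x, x + y} : Finset F) := by simp [h3, h4, h5]
    have ny2 : y ∉ ({x, z + x, z} : Finset F) := by simp [e1, h8, h6]
    have ny3 : y ∉ ({y + z, z + x, x + y} : Finset F) := by simp [h7, h8, h9]
    have nz0 : z ∉ ({x, y, x + y} : Finset F) := by simp [e2, e6, h12]
    have nz3 : z ∉ ({y + z, z + x, x + y} : Finset F) := by simp [h10, h11, h12]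
    have nyz0 : y + z ∉ ({x, y, x + y} : Finset F) := by simp [e3, e7, h14]
    have nyz2 : y + z ∉ ({x, z + x, z} : Finset F) := by simp [e3, h13, e10]
    have nzx0 : z + x ∉ ({x, y, x + y} : Finset F) := by simp [e4, e8, h15]
    have nzx1 : z + x ∉ ({y + z, y, z} : Finset F) := by simp [e13, e8, e11]
    have nxy1 : x + y ∉ ({y + z, y, z} : Finset F) := by simp [e14, e9, e12]
    have nxy2 : x + y ∉ ({x, z + x, z} : Finset F) := by simp [e5, e15, e12]
    rintro u v huv (⟨hu, hv⟩ | ⟨hu, hv⟩ | ⟨hu, hv⟩) <;>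
      simp only [Finset.mem_insert, Finset.mem_singleton] at hu hv
    · rcases hu with rfl | rfl
      · rcases hv with rfl | rfl
        · exact ⟨0, ⟨by simp, by simp⟩, all4 _ (fun _ => rfl) (fun h => absurd h.1 nx1) (fun h => absurd h.2 ny2) (fun h => absurd h.1 nx3)⟩
        · exact ⟨2, ⟨by simp, by simp⟩, all4 _ (fun h => absurd h.2 nzx0) (fun h => absurd h.1 nx1) (fun _ => rfl) (fun h => absurd h.1 nx3)⟩
      · rcases hv with rfl | rfl
        · exact ⟨1, ⟨by simp, by simp⟩, all4 _ (fun h => absurd h.1 nyz0) (fun _ => rfl) (fun h => absurd h.1 nyz2) (fun h => absurd h.2 ny3)⟩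
        · exact ⟨3, ⟨by simp, by simp⟩, all4 _ (fun h => absurd h.1 nyz0) (fun h => absurd h.2 nzx1) (fun h => absurd h.1 nyz2) (fun _ => rfl)⟩
    · rcases hu with rfl | rfl
      · rcases hv with rfl | rfl
        · exact ⟨2, ⟨by simp, by simp⟩, all4 _ (fun h => absurd h.2 nz0) (fun h => absurd h.1 nx1) (fun _ => rfl) (fun h => absurd h.1 nx3)⟩
        · exact ⟨0, ⟨by simp, by simp⟩, all4 _ (fun _ => rfl) (fun h => absurd h.1 nx1) (fun h => absurd h.2 nxy2) (fun h => absurd h.1 nx3)⟩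
      · rcases hv with rfl | rfl
        · exact ⟨1, ⟨by simp, by simp⟩, all4 _ (fun h => absurd h.1 nyz0) (fun _ => rfl) (fun h => absurd h.1 nyz2) (fun h => absurd h.2 nz3)⟩
        · exact ⟨3, ⟨by simp, by simp⟩, all4 _ (fun h => absurd h.1 nyz0) (fun h => absurd h.2 nxy1) (fun h => absurd h.1 nyz2) (fun _ => rfl)⟩
    · rcases hu with rfl | rfl
      · rcases hv with rfl | rfl
        · exact ⟨1, ⟨by simp, by simp⟩, all4 _ (fun h => absurd h.2 nz0) (fun _ => rfl) (fun h => absurd h.1 ny2) (fun h => absurd h.1 ny3)⟩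
        · exact ⟨0, ⟨by simp, by simp⟩, all4 _ (fun _ => rfl) (fun h => absurd h.2 nxy1) (fun h => absurd h.1 ny2) (fun h => absurd h.1 ny3)⟩
      · rcases hv with rfl | rfl
        · exact ⟨2, ⟨by simp, by simp⟩, all4 _ (fun h => absurd h.1 nzx0) (fun h => absurd h.1 nzx1) (fun _ => rfl) (fun h => absurd h.2 nz3)⟩
        · exact ⟨3, ⟨by simp, by simp⟩, all4 _ (fun h => absurd h.1 nzx0) (fun h => absurd h.1 nzx1) (fun h => absurd h.2 nxy2) (fun _ => rfl)⟩
end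

section
/- Let G be a 3-uniform hypergraph on n vertices and M a maximum matching in G leaving at least 6 vertices uncovered. Fix disjoint pairs a₁b₁, a₂b₂, a₃b₃ among the uncovered vertices, and suppose every pair of vertices has codegree at least n/3. Then there exist an edge e ∈ M, distinct vertices c, c' ∈ e, and distinct indices i, i' ∈ {1,2,3} such that {aᵢ,bᵢ,c} and {aᵢ',bᵢ',c'} are edges of G — contradicting maximality of M. Hence a maximum matching leaves at most 3 vertices uncovered. -/
/-- If `M` is a maximum matching of a 3-uniform hypergraph `G` on `n` vertices with
minimum codegree at least `n/3`, leaving at least 6 vertices uncovered, then for any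
disjoint pairs `aᵢbᵢ` (i = 1,2,3) of uncovered vertices there are an edge `e ∈ M`,
distinct `c, c' ∈ e` and distinct indices `i, i'` with `{aᵢ,bᵢ,c}` and `{aᵢ',bᵢ',c'}`
edges of `G` (contradicting maximality). -/
theorem stmt_15 {V : Type*} [Fintype V] [DecidableEq V] (n : ℕ)
    (hn : Fintype.card V = n) (G : Finset (Finset V)) (hunif : ∀ e ∈ G, e.card = 3)
    (hcodeg : ∀ u v : V, u ≠ v → n ≤ 3 * (G.filter (fun e => u ∈ e ∧ v ∈ e)).card)
    (M : Finset (Finset V)) (hMG : M ⊆ G)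
    (hM : (M : Set (Finset V)).PairwiseDisjoint id)
    (hmax : ∀ M' : Finset (Finset V), M' ⊆ G →
      (M' : Set (Finset V)).PairwiseDisjoint id → M'.card ≤ M.card)
    (a b : Fin 3 → V)
    (hsix : ({a 0, b 0, a 1, b 1, a 2, b 2} : Finset V).card = 6)
    (huncov : ∀ i : Fin 3, a i ∉ M.biUnion id ∧ b i ∉ M.biUnion id) :
    ∃ e ∈ M, ∃ c ∈ e, ∃ c' ∈ e, c ≠ c' ∧ ∃ i i' : Fin 3, i ≠ i' ∧
      ({a i, b i, c} : Finset V) ∈ G ∧ ({a i', b i', c'} : Finset V) ∈ G := by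
  classical
  set W : Finset V := M.biUnion id with hW
  -- pairwise distinctness of the six vertices
  have hlistfin : ([a 0, b 0, a 1, b 1, a 2, b 2] : List V).toFinset
      = ({a 0, b 0, a 1, b 1, a 2, b 2} : Finset V) := by simp
  have hnodup : ([a 0, b 0, a 1, b 1, a 2, b 2] : List V).Nodup := by
    have hlen : ([a 0, b 0, a 1, b 1, a 2, b 2] : List V).dedup.length = 6 := by
      rw [← List.card_toFinset, hlistfin, hsix]
    have hsub := List.dedup_sublist ([a 0, b 0, a 1, b 1, a 2, b 2] : List V)
    have heq := hsub.eq_of_length (by simp [hlen])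
    rw [← heq]; exact List.nodup_dedup _
  have hab : ∀ i : Fin 3, a i ≠ b i := by
    simp only [List.nodup_cons, List.mem_cons, List.not_mem_nil] at hnodup
    intro i
    fin_cases i <;> tauto
  -- the link sets N i
  set N : Fin 3 → Finset V :=
    fun i => Finset.univ.filter (fun c => ({a i, b i, c} : Finset V) ∈ G) with hNdef
  have hNcard : ∀ i, n ≤ 3 * (N i).card := by
    intro i
    have h1 := hcodeg (a i) (b i) (hab i)
    have h2 : G.filter (fun e => a i ∈ e ∧ b i ∈ e)
        ⊆ (N i).image (fun c => ({a i, b i, c} : Finset V)) := by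
      intro e he
      simp only [Finset.mem_filter] at he
      obtain ⟨heG, hai, hbi⟩ := he
      have hcard := hunif e heG
      have hsub : ({a i, b i} : Finset V) ⊆ e := by
        intro x hx
        simp only [Finset.mem_insert, Finset.mem_singleton] at hx
        rcases hx with h | h <;> subst h <;> assumption
      have hc2 : ({a i, b i} : Finset V).card = 2 := by
        rw [Finset.card_insert_of_notMem (by simp [hab i]), Finset.card_singleton]
      have hsd : (e \ ({a i, b i} : Finset V)).card = 1 := by
        rw [Finset.card_sdiff_of_subset hsub, hcard, hc2]
      obtain ⟨c, hc⟩ := Finset.card_eq_one.mp hsd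
      have hcmem : c ∈ e ∧ c ∉ ({a i, b i} : Finset V) := by
        have : c ∈ e \ ({a i, b i} : Finset V) := by rw [hc]; exact Finset.mem_singleton_self _
        exact Finset.mem_sdiff.mp this
      have hce : ({a i, b i, c} : Finset V) = e := by
        apply Finset.eq_of_subset_of_card_le
        · intro x hx
          simp only [Finset.mem_insert, Finset.mem_singleton] at hx
          rcases hx with h | h | h <;> subst h
          · exact hai
          · exact hbi
          · exact hcmem.1
        · rw [hcard]
          have hca : c ≠ a i := fun h => hcmem.2 (by simp [h])
          have hcb : c ≠ b i := fun h => hcmem.2 (by simp [h])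
          rw [Finset.card_insert_of_notMem (by simp [hab i, hca.symm]),
            Finset.card_insert_of_notMem (by simp [hcb.symm]), Finset.card_singleton]
      refine Finset.mem_image.mpr ⟨c, ?_, hce⟩
      simp only [hNdef, Finset.mem_filter, Finset.mem_univ, true_and]
      rw [hce]; exact heG
    calc n ≤ 3 * (G.filter (fun e => a i ∈ e ∧ b i ∈ e)).card := h1
      _ ≤ 3 * ((N i).image (fun c => ({a i, b i, c} : Finset V))).card := by
          exact Nat.mul_le_mul_left 3 (Finset.card_le_card h2)
      _ ≤ 3 * (N i).card := Nat.mul_le_mul_left 3 Finset.card_image_le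
  -- every neighbour lies in the covered set W
  have hNW : ∀ i, N i ⊆ W := by
    intro i c hc
    by_contra hcW
    simp only [hNdef, Finset.mem_filter, Finset.mem_univ, true_and] at hc
    set f : Finset V := ({a i, b i, c} : Finset V) with hf
    have hfM : f ∉ M := fun h =>
      (huncov i).1 (Finset.mem_biUnion.mpr ⟨f, h, by simp [hf]⟩)
    have hdisj : ∀ e ∈ M, Disjoint f e := by
      intro e he
      rw [Finset.disjoint_left]
      intro x hx hxe
      have hxW : x ∈ W := Finset.mem_biUnion.mpr ⟨e, he, hxe⟩
      simp only [hf, Finset.mem_insert, Finset.mem_singleton] at hx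
      rcases hx with h | h | h <;> subst h
      · exact (huncov i).1 hxW
      · exact (huncov i).2 hxW
      · exact hcW hxW
    have hsubG : insert f M ⊆ G := by
      intro e he
      rcases Finset.mem_insert.mp he with h | h
      · subst h; exact hc
      · exact hMG h
    have hpd : ((insert f M : Finset (Finset V)) : Set (Finset V)).PairwiseDisjoint id := by
      rw [Finset.coe_insert]
      exact hM.insert (fun e he _ => hdisj e he)
    have := hmax (insert f M) hsubG hpd
    rw [Finset.card_insert_of_notMem hfM] at this
    omega
  have hMdisj : ∀ e ∈ M, ∀ e' ∈ M, e ≠ e' → Disjoint e e' :=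
    fun e he e' he' hne => hM (Finset.mem_coe.mpr he) (Finset.mem_coe.mpr he') hne
  have hWcard : W.card = 3 * M.card := by
    have hcb : W.card = ∑ e ∈ M, e.card := Finset.card_biUnion hMdisj
    rw [hcb]
    rw [Finset.sum_congr rfl (fun e he => hunif e (hMG he)), Finset.sum_const, smul_eq_mul,
      Nat.mul_comm]
  -- W misses the six vertices
  have hWle : 3 * M.card + 6 ≤ n := by
    have hd : Disjoint W ({a 0, b 0, a 1, b 1, a 2, b 2} : Finset V) := by
      rw [Finset.disjoint_right]
      intro x hx hxW
      simp only [Finset.mem_insert, Finset.mem_singleton] at hx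
      rcases hx with h | h | h | h | h | h <;> subst h
      · exact (huncov 0).1 hxW
      · exact (huncov 0).2 hxW
      · exact (huncov 1).1 hxW
      · exact (huncov 1).2 hxW
      · exact (huncov 2).1 hxW
      · exact (huncov 2).2 hxW
    have := Finset.card_le_univ (W ∪ ({a 0, b 0, a 1, b 1, a 2, b 2} : Finset V))
    rw [Finset.card_union_of_disjoint hd, hWcard, hsix, hn] at this
    exact this
  -- weight function
  set w : V → ℕ := fun c => (Finset.univ.filter (fun i : Fin 3 => c ∈ N i)).card with hwdef
  have hsumW : n ≤ ∑ c ∈ W, w c := by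
    have h1 : ∀ i : Fin 3, W.filter (fun c => c ∈ N i) = N i := by
      intro i
      ext x
      simp only [Finset.mem_filter, and_iff_right_iff_imp]
      exact fun hx => hNW i hx
    have h2 : ∑ c ∈ W, w c = ∑ i : Fin 3, (W.filter (fun c => c ∈ N i)).card := by
      simp only [hwdef, Finset.card_filter]
      rw [Finset.sum_comm]
    rw [h2]
    simp only [h1]
    have h0 := hNcard 0
    have hh1 := hNcard 1
    have hh2 := hNcard 2
    rw [Fin.sum_univ_three]
    omega
  have hsumM : n ≤ ∑ e ∈ M, ∑ c ∈ e, w c := by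
    have := Finset.sum_biUnion (f := w) (s := M) (t := id) hM
    rw [← hW] at this
    simpa [this] using hsumW
  have hw3 : ∀ c, w c ≤ 3 := by
    intro c
    calc w c ≤ (Finset.univ : Finset (Fin 3)).card := Finset.card_filter_le _ _
      _ = 3 := by simp
  -- find a heavy edge
  have hheavy : ∃ e ∈ M, 4 ≤ ∑ c ∈ e, w c := by
    by_contra h
    push_neg at h
    have hle : ∑ e ∈ M, ∑ c ∈ e, w c ≤ ∑ e ∈ M, 3 :=
      Finset.sum_le_sum (fun e he => by have := h e he; omega)
    rw [Finset.sum_const, smul_eq_mul] at hle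
    omega
  obtain ⟨e, heM, he4⟩ := hheavy
  have hecard : e.card = 3 := hunif e (hMG heM)
  -- a vertex of weight ≥ 2
  have hc2 : ∃ c ∈ e, 2 ≤ w c := by
    by_contra h
    push_neg at h
    have hle : ∑ c ∈ e, w c ≤ ∑ c ∈ e, 1 :=
      Finset.sum_le_sum (fun c hc => by have := h c hc; omega)
    rw [Finset.sum_const, smul_eq_mul, hecard] at hle
    omega
  obtain ⟨c, hce, hc2⟩ := hc2
  have hrest : 1 ≤ ∑ c' ∈ e.erase c, w c' := by
    have h := Finset.add_sum_erase e w hce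
    have := hw3 c
    omega
  obtain ⟨c', hc'e, hc'w⟩ : ∃ c' ∈ e.erase c, w c' ≠ 0 :=
    Finset.exists_ne_zero_of_sum_ne_zero (by omega)
  obtain ⟨hc'ne, hc'mem⟩ := Finset.mem_erase.mp hc'e
  -- pick indices
  have hpos' : 0 < (Finset.univ.filter (fun i : Fin 3 => c' ∈ N i)).card :=
    Nat.pos_of_ne_zero hc'w
  obtain ⟨i', hi'⟩ := Finset.card_pos.mp hpos'
  have hc2' : 2 ≤ (Finset.univ.filter (fun i : Fin 3 => c ∈ N i)).card := hc2
  have hIc : 1 ≤ ((Finset.univ.filter (fun i : Fin 3 => c ∈ N i)).erase i').card := by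
    have := Finset.pred_card_le_card_erase
      (s := Finset.univ.filter (fun i : Fin 3 => c ∈ N i)) (a := i')
    omega
  obtain ⟨i, hi⟩ := Finset.card_pos.mp (show
    0 < ((Finset.univ.filter (fun i : Fin 3 => c ∈ N i)).erase i').card by omega)
  obtain ⟨hii', hiI⟩ := Finset.mem_erase.mp hi
  simp only [Finset.mem_filter, Finset.mem_univ, true_and, hNdef] at hiI hi'
  exact ⟨e, heM, c, hce, c', hc'mem, fun h => hc'ne h.symm, i, i', hii', hiI, hi'⟩
end

section
/- Let G be a graph on n vertices obtained from the balanced complete bipartite graph H with parts of size n/2 by adding a (n/4 - 1)-regular graph inside each part (n divisible by 4). Then G has no fractional triangle decomposition. -/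
private lemma exch17 {V : Type*} [Fintype V] [DecidableEq V] (w : Finset V → ℝ)
    (s : Finset (V × V)) :
    ∑ p ∈ s, ∑ t ∈ Finset.univ.filter (fun t : Finset V => p.1 ∈ t ∧ p.2 ∈ t), w t
      = ∑ t : Finset V, w t * ((s.filter (fun p => p.1 ∈ t ∧ p.2 ∈ t)).card : ℝ) := by
  simp_rw [Finset.sum_filter]
  rw [Finset.sum_comm]
  refine Finset.sum_congr rfl fun t _ => ?_
  rw [← Finset.sum_filter, Finset.sum_const, nsmul_eq_mul, mul_comm]

/-- Space barrier for fractional triangle decompositions: the graph obtained from the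
balanced complete bipartite graph on `n` vertices (`4 ∣ n`, `n > 0`) by adding an
`(n/4 - 1)`-regular graph inside each part has no fractional triangle decomposition. -/
theorem stmt_17 {V : Type*} [Fintype V] [DecidableEq V] (n : ℕ) (hn : Fintype.card V = n)
    (hpos : 0 < n) (h4 : 4 ∣ n) (A : Finset V) (hA : A.card = n / 2)
    (G : SimpleGraph V) [DecidableRel G.Adj]
    (hcross : ∀ u v : V, ¬ (u ∈ A ↔ v ∈ A) → G.Adj u v)
    (hregA : ∀ v ∈ A, (A.filter (fun u => G.Adj v u)).card = n / 4 - 1)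
    (hregB : ∀ v ∈ Aᶜ, (Aᶜ.filter (fun u => G.Adj v u)).card = n / 4 - 1) :
    ¬ ∃ w : Finset V → ℝ,
      (∀ t, 0 ≤ w t) ∧
      (∀ t, w t ≠ 0 → t.card = 3 ∧ ∀ u ∈ t, ∀ v ∈ t, u ≠ v → G.Adj u v) ∧
      (∀ u v : V, G.Adj u v →
        ∑ t ∈ Finset.univ.filter (fun t : Finset V => u ∈ t ∧ v ∈ t), w t = 1) := by
  rintro ⟨w, hw0, hwt, hsum⟩
  obtain ⟨m, rfl⟩ := h4
  have hm : 0 < m := by omega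
  have hAcard : A.card = 2 * m := by omega
  have hBcard : Aᶜ.card = 2 * m := by
    rw [Finset.card_compl, hn, hAcard]; omega
  -- cardinalities of a triangle's intersections with A and Aᶜ
  have hpart : ∀ t : Finset V,
      (A.filter (· ∈ t)).card + (Aᶜ.filter (· ∈ t)).card = t.card := by
    intro t
    have h1 : A.filter (· ∈ t) = t.filter (· ∈ A) := by
      ext x; simp [and_comm]
    have h2 : Aᶜ.filter (· ∈ t) = t.filter (fun x => ¬ x ∈ A) := by
      ext x; simp [and_comm]
    rw [h1, h2, Finset.card_filter_add_card_filter_not]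
  -- the cross sum
  have scross : ∑ p ∈ A ×ˢ Aᶜ, ∑ t ∈ Finset.univ.filter
      (fun t : Finset V => p.1 ∈ t ∧ p.2 ∈ t), w t = (4 : ℝ) * m ^ 2 := by
    have h1 : ∀ p ∈ A ×ˢ Aᶜ, (∑ t ∈ Finset.univ.filter
        (fun t : Finset V => p.1 ∈ t ∧ p.2 ∈ t), w t) = 1 := by
      intro p hp
      obtain ⟨h1, h2⟩ := Finset.mem_product.1 hp
      rw [Finset.mem_compl] at h2
      exact hsum _ _ (hcross _ _ (fun hiff => h2 (hiff.mp h1)))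
    rw [Finset.sum_congr rfl h1, Finset.sum_const, Finset.card_product, hAcard, hBcard,
      nsmul_eq_mul, mul_one]
    push_cast; ring
  -- the inner sums
  have sinner : ∀ S : Finset V, (∀ v ∈ S, (S.filter (fun u => G.Adj v u)).card = m - 1) →
      S.card = 2 * m →
      ∑ p ∈ (S ×ˢ S).filter (fun p => G.Adj p.1 p.2), ∑ t ∈ Finset.univ.filter
        (fun t : Finset V => p.1 ∈ t ∧ p.2 ∈ t), w t = (2 : ℝ) * m * (m - 1) := by
    intro S hreg hScard
    rw [Finset.sum_congr rfl (fun p hp => hsum p.1 p.2 (Finset.mem_filter.1 hp).2),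
      Finset.sum_const, nsmul_eq_mul, mul_one]
    have hc : ((S ×ˢ S).filter (fun p => G.Adj p.1 p.2)).card = 2 * m * (m - 1) := by
      rw [Finset.card_filter, Finset.sum_product]
      have : ∀ v ∈ S, (∑ u ∈ S, if G.Adj v u then 1 else 0) = m - 1 := by
        intro v hv; rw [← Finset.card_filter]; exact hreg v hv
      rw [Finset.sum_congr rfl this, Finset.sum_const, hScard, smul_eq_mul]
    rw [hc]
    push_cast [Nat.cast_sub hm]
    ring
  have sA := sinner A (by intro v hv; rw [hregA v hv]; omega) hAcard
  have sB := sinner Aᶜ (by intro v hv; rw [hregB v hv]; omega) hBcard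
  -- rewrite all sums via exch17
  rw [exch17] at scross sA sB
  -- key per-triangle estimates
  set a : Finset V → ℕ := fun t => (A.filter (· ∈ t)).card with ha
  set b : Finset V → ℕ := fun t => (Aᶜ.filter (· ∈ t)).card with hb
  have hcrossCount : ∀ t : Finset V,
      ((A ×ˢ Aᶜ).filter (fun p => p.1 ∈ t ∧ p.2 ∈ t)).card = a t * b t := by
    intro t
    rw [show ((A ×ˢ Aᶜ).filter (fun p => p.1 ∈ t ∧ p.2 ∈ t))
        = (A.filter (· ∈ t)) ×ˢ (Aᶜ.filter (· ∈ t)) from ?_, Finset.card_product]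
    ext p; simp [Finset.mem_product]; tauto
  have hinnerCount : ∀ S : Finset V, ∀ t : Finset V, w t ≠ 0 →
      (((S ×ˢ S).filter (fun p => G.Adj p.1 p.2)).filter
          (fun p => p.1 ∈ t ∧ p.2 ∈ t)).card
        = (S.filter (· ∈ t)).card * (S.filter (· ∈ t)).card - (S.filter (· ∈ t)).card := by
    intro S t hwne
    obtain ⟨-, htri⟩ := hwt t hwne
    rw [← Finset.offDiag_card]
    congr 1
    ext p
    simp only [Finset.mem_filter, Finset.mem_product, Finset.mem_offDiag]
    constructor
    · rintro ⟨⟨⟨h1, h2⟩, hadj⟩, ht1, ht2⟩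
      exact ⟨⟨h1, ht1⟩, ⟨h2, ht2⟩, G.ne_of_adj hadj⟩
    · rintro ⟨⟨h1, ht1⟩, ⟨h2, ht2⟩, hne⟩
      exact ⟨⟨⟨h1, h2⟩, htri _ ht1 _ ht2 hne⟩, ht1, ht2⟩
  -- chain of inequalities
  have step1 : (4 : ℝ) * m ^ 2 ≤ ∑ t : Finset V, 2 * w t := by
    rw [← scross]
    refine Finset.sum_le_sum fun t _ => ?_
    rcases eq_or_ne (w t) 0 with h | h
    · simp [h]
    · rw [hcrossCount t]
      obtain ⟨hcard3, -⟩ := hwt t h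
      have hab : a t + b t = 3 := by rw [ha, hb]; simp only; rw [hpart t, hcard3]
      have : a t * b t ≤ 2 := by
        rcases (show (a t = 0 ∧ b t = 3) ∨ (a t = 1 ∧ b t = 2) ∨ (a t = 2 ∧ b t = 1) ∨
            (a t = 3 ∧ b t = 0) by omega) with ⟨h3,h4⟩|⟨h3,h4⟩|⟨h3,h4⟩|⟨h3,h4⟩ <;>
          rw [h3, h4] <;> omega
      calc w t * ((a t * b t : ℕ) : ℝ) ≤ w t * 2 := by
            refine mul_le_mul_of_nonneg_left ?_ (hw0 t)
            exact_mod_cast this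
        _ = 2 * w t := by ring
  have step2 : ∑ t : Finset V, 2 * w t ≤ (4 : ℝ) * m * (m - 1) := by
    have hAB : ∑ t : Finset V,
        (w t * ((((A ×ˢ A).filter (fun p => G.Adj p.1 p.2)).filter
            (fun p => p.1 ∈ t ∧ p.2 ∈ t)).card : ℝ)
          + w t * ((((Aᶜ ×ˢ Aᶜ).filter (fun p => G.Adj p.1 p.2)).filter
            (fun p => p.1 ∈ t ∧ p.2 ∈ t)).card : ℝ))
        = (4 : ℝ) * m * (m - 1) := by
      rw [Finset.sum_add_distrib, sA, sB]; ring
    rw [← hAB]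
    refine Finset.sum_le_sum fun t _ => ?_
    rcases eq_or_ne (w t) 0 with h | h
    · simp [h]
    · rw [hinnerCount A t h, hinnerCount Aᶜ t h]
      obtain ⟨hcard3, -⟩ := hwt t h
      have hab : a t + b t = 3 := by rw [ha, hb]; simp only; rw [hpart t, hcard3]
      have key : 2 ≤ (a t * a t - a t) + (b t * b t - b t) := by
        rcases (show (a t = 0 ∧ b t = 3) ∨ (a t = 1 ∧ b t = 2) ∨ (a t = 2 ∧ b t = 1) ∨
            (a t = 3 ∧ b t = 0) by omega) with ⟨h3,h4⟩|⟨h3,h4⟩|⟨h3,h4⟩|⟨h3,h4⟩ <;>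
          rw [h3, h4] <;> omega
      have keyR : (2 : ℝ) ≤ ((a t * a t - a t : ℕ) : ℝ) + ((b t * b t - b t : ℕ) : ℝ) := by
        exact_mod_cast key
      have := hw0 t
      nlinarith [keyR, this]
  have : (4 : ℝ) * m ^ 2 ≤ 4 * m * (m - 1) := le_trans step1 step2
  have hmR : (1 : ℝ) ≤ m := by exact_mod_cast hm
  nlinarith [this, hmR]
end
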